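/- Let L be a positive integer, γ > 0, let F be the unitary discrete Fourier transform on ℂ^L and ∇ the circular difference operator (∇z)[k] = z[(k+1) mod L] − z[k]. Then for the prior f(x) = γ‖∇(Fx)‖₂², the proximity operator is given componentwise by prox_f(y)[l] = y[l] / (1 + 2γψ[l]) with ψ[l] = 2 − 2cos(2πl/L); i.e. this point is the unique minimizer over x ∈ ℂ^L of ½‖y − x‖₂² + γ‖∇(Fx)‖₂². -/

import Mathlib

/-!
Shifting the frequency by one multiplies the `l`-th input coordinate by the character value
`e^{-2πil/L}`, so `∇ ∘ F = F ∘ M` with `M` the diagonal multiplier `e^{-2πil/L} - 1`, whose squared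
modulus is `ψ[l] = 2 - 2cos(2πl/L)`. Since `F` is unitary (Parseval), the objective decouples into
the scalar problems `½‖y_l - x_l‖² + γψ_l‖x_l‖²`; completing the square shows each is
`(½ + γψ_l)‖x_l - y_l/(1 + 2γψ_l)‖²` above its value at `y_l/(1 + 2γψ_l)`.
-/

/-- The unitary discrete Fourier transform on `ℂ^L` (identified with `ZMod L → ℂ`):
`(Fx)[k] = L^{-1/2} ∑_{l=0}^{L-1} x[l] e^{-2πikl/L}`. -/
noncomputable def dft (L : ℕ) [NeZero L] (x : ZMod L → ℂ) : ZMod L → ℂ :=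
  fun k => ((1 / Real.sqrt L : ℝ) : ℂ) *
    ∑ l : ZMod L, x l *
      Complex.exp (-(2 * Real.pi * Complex.I * (k.val : ℂ) * (l.val : ℂ) / (L : ℂ)))

open Finset Complex
open scoped ZMod ComplexConjugate

section CompletingTheSquare

variable {E : Type*} [NormedAddCommGroup E] [InnerProductSpace ℝ E]

theorem half_norm_sub_sq_add_mul_norm_sq_eq {c : ℝ} (hc : 1 + 2 * c ≠ 0) (y x : E) :
    ‖y - x‖ ^ 2 / 2 + c * ‖x‖ ^ 2 =
      ‖y - (1 + 2 * c)⁻¹ • y‖ ^ 2 / 2 + c * ‖(1 + 2 * c)⁻¹ • y‖ ^ 2 +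
        (1 / 2 + c) * ‖x - (1 + 2 * c)⁻¹ • y‖ ^ 2 := by
  set p := (1 + 2 * c)⁻¹ • y
  have hy : y = p + (2 * c) • p :=
    calc y = (1 + 2 * c) • p := (smul_inv_smul₀ hc y).symm
      _ = p + (2 * c) • p := by rw [add_smul, one_smul]
  obtain ⟨d, rfl⟩ : ∃ d, x = p + d := ⟨x - p, by abel⟩
  have hyx : y - (p + d) = (2 * c) • p + -d := by rw [hy]; abel
  have hyp : y - p = (2 * c) • p := by rw [hy]; abel
  rw [hyx, hyp, add_sub_cancel_left]
  simp only [norm_add_sq_real, norm_neg, norm_smul, inner_neg_right, inner_smul_left,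
    Real.norm_eq_abs, mul_pow, sq_abs, RCLike.conj_to_real]
  ring

theorem sum_weighted_prox_lt {ι : Type*} [Fintype ι] {γ : ℝ} (hγ : 0 ≤ γ) {w : ι → ℝ}
    (hw : ∀ i, 0 ≤ w i) (y x : ι → E) (hx : x ≠ fun i => (1 + 2 * γ * w i)⁻¹ • y i) :
    (1 / 2) * ∑ i, ‖y i - (1 + 2 * γ * w i)⁻¹ • y i‖ ^ 2 +
        γ * ∑ i, w i * ‖(1 + 2 * γ * w i)⁻¹ • y i‖ ^ 2 <
      (1 / 2) * ∑ i, ‖y i - x i‖ ^ 2 + γ * ∑ i, w i * ‖x i‖ ^ 2 := by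
  have hsum (z : ι → E) : (1 / 2) * ∑ i, ‖y i - z i‖ ^ 2 + γ * ∑ i, w i * ‖z i‖ ^ 2 =
      ∑ i, (‖y i - z i‖ ^ 2 / 2 + γ * w i * ‖z i‖ ^ 2) := by
    simp only [mul_sum, ← sum_add_distrib]
    exact sum_congr rfl fun i _ => by ring
  have hc (i : ι) : 0 ≤ γ * w i := mul_nonneg hγ (hw i)
  have hsplit (i : ι) := half_norm_sub_sq_add_mul_norm_sq_eq (c := γ * w i)
    (by linarith [hc i]) (y i) (x i)
  simp only [← mul_assoc] at hsplit
  rw [hsum, hsum]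
  obtain ⟨i₀, hi₀⟩ := Function.ne_iff.mp hx
  refine sum_lt_sum (fun i _ => ?_) ⟨i₀, mem_univ i₀, ?_⟩
  · rw [hsplit i]
    have := hc i
    exact le_add_of_nonneg_right (by positivity)
  · rw [hsplit i₀]
    have := hc i₀
    have : 0 < ‖x i₀ - (1 + 2 * γ * w i₀)⁻¹ • y i₀‖ := norm_pos_iff.mpr (sub_ne_zero.mpr hi₀)
    exact lt_add_of_pos_right _ (by positivity)

end CompletingTheSquare

theorem Complex.norm_exp_ofReal_mul_I_sub_one_sq (θ : ℝ) :
    ‖exp (θ * I) - 1‖ ^ 2 = 2 - 2 * Real.cos θ := by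
  rw [Complex.sq_norm, normSq_apply]
  simp only [sub_re, sub_im, exp_ofReal_mul_I_re, exp_ofReal_mul_I_im, one_re, one_im]
  nlinarith [Real.sin_sq_add_cos_sq θ]

namespace ZMod

variable {N : ℕ} [NeZero N]

theorem stdAddChar_neg (j : ZMod N) : stdAddChar (-j) = conj (stdAddChar j) := by
  rw [stdAddChar_apply, stdAddChar_apply, AddChar.map_neg_eq_inv, Circle.coe_inv_eq_conj]

theorem norm_stdAddChar_neg_sub_one_sq (j : ZMod N) :
    ‖stdAddChar (-j) - 1‖ ^ 2 = 2 - 2 * Real.cos (2 * Real.pi * j.val / N) := by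
  rw [stdAddChar_neg, ← map_one (starRingEnd ℂ), ← map_sub, norm_conj, stdAddChar_apply,
    toCircle_eq_circleExp, Circle.coe_exp, norm_exp_ofReal_mul_I_sub_one_sq]
  ring_nf

theorem dft_apply_add (Φ : ZMod N → ℂ) (k a : ZMod N) :
    𝓕 Φ (k + a) = 𝓕 (fun j => stdAddChar (-(j * a)) * Φ j) k := by
  simp only [dft_apply, smul_eq_mul]
  refine sum_congr rfl fun j _ => ?_
  rw [mul_add, neg_add, AddChar.map_add_eq_mul]
  ring

theorem sum_norm_sq_dft (Φ : ZMod N → ℂ) : ∑ k, ‖𝓕 Φ k‖ ^ 2 = N * ∑ j, ‖Φ j‖ ^ 2 := by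
  have hdual (j : ZMod N) : ∑ k, stdAddChar (-(j * k)) * conj (𝓕 Φ k) = conj (N * Φ j) := by
    have h := congr_fun (dft_dft Φ) (-j)
    rw [neg_neg, smul_eq_mul] at h
    rw [← h, dft_apply, map_sum]
    refine sum_congr rfl fun k _ => ?_
    rw [smul_eq_mul, map_mul, ← stdAddChar_neg, neg_neg, mul_neg, mul_comm k]
  apply ofReal_injective
  push_cast
  calc ∑ k, (‖𝓕 Φ k‖ : ℂ) ^ 2 = ∑ k, conj (𝓕 Φ k) * ∑ j, stdAddChar (-(j * k)) * Φ j := by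
        simp_rw [← mul_conj', mul_comm (𝓕 Φ _), dft_apply, smul_eq_mul]
    _ = ∑ j, Φ j * ∑ k, stdAddChar (-(j * k)) * conj (𝓕 Φ k) := by
        simp_rw [mul_sum]
        rw [sum_comm]
        exact sum_congr rfl fun j _ => sum_congr rfl fun k _ => by ring
    _ = N * ∑ j, (‖Φ j‖ : ℂ) ^ 2 := by
        simp_rw [hdual, mul_sum, map_mul, map_natCast, mul_left_comm _ (N : ℂ), mul_conj']

end ZMod

section UnitaryDFT

variable (L : ℕ) [NeZero L]

theorem dft_eq_inv_sqrt_mul_dft (x : ZMod L → ℂ) (k : ZMod L) :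
    dft L x k = ((Real.sqrt L)⁻¹ : ℂ) * 𝓕 x k := by
  rw [dft, ZMod.dft_apply, one_div, ofReal_inv]
  congr 1
  refine sum_congr rfl fun l _ => ?_
  have hcast : -(l * k) = ((-(l.val * k.val : ℤ) : ℤ) : ZMod L) := by push_cast; simp
  rw [smul_eq_mul, mul_comm, hcast, ZMod.stdAddChar_coe]
  push_cast
  ring_nf

theorem sum_norm_sq_dft (x : ZMod L → ℂ) : ∑ k, ‖dft L x k‖ ^ 2 = ∑ l, ‖x l‖ ^ 2 := by
  have hL : (0 : ℝ) < L := Nat.cast_pos.mpr (Nat.pos_of_neZero L)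
  simp_rw [dft_eq_inv_sqrt_mul_dft, norm_mul, mul_pow, ← mul_sum, ZMod.sum_norm_sq_dft,
    norm_inv, norm_real, Real.norm_eq_abs, inv_pow, sq_abs, Real.sq_sqrt hL.le]
  field_simp

theorem dft_add_one_sub (x : ZMod L → ℂ) (k : ZMod L) :
    dft L x (k + 1) - dft L x k = dft L (fun l => (ZMod.stdAddChar (-l) - 1) * x l) k := by
  rw [dft_eq_inv_sqrt_mul_dft, dft_eq_inv_sqrt_mul_dft, dft_eq_inv_sqrt_mul_dft,
    ZMod.dft_apply_add, ← mul_sub, ← Pi.sub_apply, ← map_sub]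
  simp only [mul_one, Pi.sub_def, sub_one_mul]

theorem sum_norm_sq_dft_add_one_sub (x : ZMod L → ℂ) :
    ∑ k, ‖dft L x (k + 1) - dft L x k‖ ^ 2 =
      ∑ l : ZMod L, (2 - 2 * Real.cos (2 * Real.pi * (l.val : ℝ) / (L : ℝ))) * ‖x l‖ ^ 2 := by
  simp_rw [dft_add_one_sub, sum_norm_sq_dft, norm_mul, mul_pow,
    ZMod.norm_stdAddChar_neg_sub_one_sq]

end UnitaryDFT

/-- for `γ > 0` and the prior `f(x) = γ‖∇(Fx)‖₂²` (circular gradient of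
the unitary DFT), the proximity operator is given componentwise by
`prox_f(y)[l] = y[l]/(1 + 2γψ[l])` with `ψ[l] = 2 - 2cos(2πl/L)`: this point is the
unique minimizer over `x ∈ ℂ^L` of `½‖y - x‖₂² + γ‖∇(Fx)‖₂²`. -/
theorem prox_grad_dft
    (L : ℕ) [NeZero L] (γ : ℝ) (hγ : 0 < γ) (y : ZMod L → ℂ) :
    ∀ x : ZMod L → ℂ,
      x ≠ (fun l => y l /
        (((1 + 2 * γ * (2 - 2 * Real.cos (2 * Real.pi * (l.val : ℝ) / (L : ℝ))) : ℝ)) : ℂ)) →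
      (1 / 2) * (∑ l : ZMod L, ‖y l - y l /
            (((1 + 2 * γ * (2 - 2 * Real.cos (2 * Real.pi * (l.val : ℝ) / (L : ℝ))) : ℝ)) : ℂ)‖ ^ 2) +
          γ * ∑ k : ZMod L,
            ‖dft L (fun l => y l /
                (((1 + 2 * γ * (2 - 2 * Real.cos (2 * Real.pi * (l.val : ℝ) / (L : ℝ))) : ℝ)) : ℂ))
                (k + 1) -
              dft L (fun l => y l /
                (((1 + 2 * γ * (2 - 2 * Real.cos (2 * Real.pi * (l.val : ℝ) / (L : ℝ))) : ℝ)) : ℂ))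
                k‖ ^ 2 <
        (1 / 2) * (∑ l : ZMod L, ‖y l - x l‖ ^ 2) +
          γ * ∑ k : ZMod L, ‖dft L x (k + 1) - dft L x k‖ ^ 2 := by
  intro x hx
  have hψ (l : ZMod L) : 0 ≤ 2 - 2 * Real.cos (2 * Real.pi * (l.val : ℝ) / (L : ℝ)) := by
    linarith [Real.cos_le_one (2 * Real.pi * (l.val : ℝ) / (L : ℝ))]
  have hdiv (r : ℝ) (z : ℂ) : z / (r : ℂ) = r⁻¹ • z := by
    rw [real_smul, ofReal_inv, div_eq_inv_mul]
  simp only [hdiv] at hx ⊢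
  rw [sum_norm_sq_dft_add_one_sub, sum_norm_sq_dft_add_one_sub]
  exact sum_weighted_prox_lt hγ.le hψ y x hx
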